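/- Let φ = ⋁_{i=1}^ℓ ⋀_{j=1}^3 l_{i,j} be a propositional 3-DNF formula over variables v_1, …, v_n; for each literal set p_{i,j} = 1 and u_{i,j} = v_k if l_{i,j} = v_k, and p_{i,j} = 0 and u_{i,j} = v_k if l_{i,j} = ¬v_k. Define the WKB (T, A_φ)_ω where T = {Bool ⊑ True, Var ⊑ ∃val, ∃val^- ⊑ Bool}, and A_φ = {False(a), True(b), Bool(a), Bool(b), val(a,a), val(a,b), val(d,a)} ∪ {Var(v_k) | 1 ≤ k ≤ n} ∪ {clause_s(a_s, c_i) | 1 ≤ i ≤ ℓ, s = (p_{i,1}, p_{i,2}, p_{i,3})} ∪ {clause_s(a_{s'}, a) | s, s' ∈ {0,1}³, s ≠ s'} ∪ {clause_s(d, d) | s ∈ {0,1}³} ∪ {lit_{j,p_{i,j}}(c_i, u_{i,j}) | 1 ≤ i ≤ ℓ, 1 ≤ j ≤ 3} ∪ {lit_{j,s}(a, a), lit_{j,s}(d, d) | 1 ≤ j ≤ 3, s ∈ {0,1}}; ω assigns weight 1 to Bool ⊑ True and weight ∞ to all other axioms and all assertions. Let q = ∃y ⋀_{s ∈ {0,1}³}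 q_s(y), where for s = (s_1, s_2, s_3), q_s(y) = ∃y_{s,0} ∃y_{s,1} ∃y_{s,2} ∃y_{s,3} ∃y'_{s,1} ∃y'_{s,2} ∃y'_{s,3} ( clause_s(y, y_{s,0}) ∧ ⋀_{j=1}^3 (lit_{j,s_j}(y_{s,0}, y_{s,j}) ∧ val(y_{s,j}, y'_{s,j})) ∧ ⋀_{j : s_j = 1} True(y'_{s,j}) ∧ ⋀_{j : s_j = 0} False(y'_{s,j}) ). Then φ is a tautology if and only if (T, A_φ)_ω ⊨_c^1 q. -/

import Mathlib

namespace DL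

/-! ### Syntax -/

abbrev IndName := ℕ
abbrev CName := ℕ
abbrev RName := ℕ

/-- Roles: role names and inverse roles. -/
inductive Role where
  | name : RName → Role
  | inv  : RName → Role
deriving DecidableEq

/-- `ALCHIO` concepts. -/
inductive Concept where
  | top  : Concept
  | bot  : Concept
  | atom : CName → Concept
  | nom  : IndName → Concept
  | neg  : Concept → Concept
  | conj : Concept → Concept → Concept
  | ex   : Role → Concept → Concept
deriving DecidableEq

/-- TBox axioms: concept inclusions and role inclusions. -/
inductive Axiom where
  | ci : Concept → Concept → Axiom
  | ri : Role → Role → Axiom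
deriving DecidableEq

/-- ABox assertions. -/
inductive Assertion where
  | ca : CName → IndName → Assertion
  | ra : RName → IndName → IndName → Assertion
deriving DecidableEq

/-! ### Interpretations -/

/-- A DL interpretation with domain a subset of a universe `U`.  Individual names are
interpreted via `indI` (under the standard names assumption, the individual names of the
ABox under consideration are interpreted "as themselves", i.e. injectively). -/
structure Interp (U : Type) where
  dom : Set U
  indI : IndName → U
  cI : CName → Set U
  rI : RName → Set (U × U)
  cI_sub : ∀ A, cI A ⊆ dom
  rI_sub : ∀ r p, p ∈ rI r → p.1 ∈ dom ∧ p.2 ∈ dom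

variable {U : Type}

/-- Every individual name denotes an element of the domain. -/
def Interp.Proper (I : Interp U) : Prop := ∀ a, I.indI a ∈ I.dom

def Role.interp (I : Interp U) : Role → Set (U × U)
  | Role.name r => I.rI r
  | Role.inv r  => {p | (p.2, p.1) ∈ I.rI r}

def Concept.interp (I : Interp U) : Concept → Set U
  | Concept.top => I.dom
  | Concept.bot => ∅
  | Concept.atom A => I.cI A
  | Concept.nom a => {I.indI a} ∩ I.dom
  | Concept.neg C => I.dom \ Concept.interp I C
  | Concept.conj C D => Concept.interp I C ∩ Concept.interp I D
  | Concept.ex r C => {d | ∃ e, (d, e) ∈ Role.interp I r ∧ e ∈ Concept.interp I C}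

def Assertion.sat (I : Interp U) : Assertion → Prop
  | Assertion.ca A a => I.indI a ∈ I.cI A
  | Assertion.ra r a b => (I.indI a, I.indI b) ∈ I.rI r

/-! ### Violations and cost -/

/-- Violations of a concept inclusion `C ⊑ D`. -/
def vioCI (I : Interp U) (C D : Concept) : Set U :=
  Concept.interp I C \ Concept.interp I D

/-- Violations of a role inclusion `r ⊑ s`. -/
def vioRI (I : Interp U) (r s : Role) : Set (U × U) :=
  Role.interp I r \ Role.interp I s

/-- The number of violations of an axiom. -/
noncomputable def Axiom.vioCount (I : Interp U) : Axiom → ℕ∞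
  | Axiom.ci C D => (vioCI I C D).encard
  | Axiom.ri r s => (vioRI I r s).encard

open Classical in
/-- The cost of an interpretation w.r.t. a weighted knowledge base `(T, A)` with weight
functions `wT` (on TBox axioms) and `wA` (on ABox assertions). -/
noncomputable def cost (T : Finset Axiom) (A : Finset Assertion)
    (wT : Axiom → ℕ∞) (wA : Assertion → ℕ∞) (I : Interp U) : ℕ∞ :=
  (∑ τ ∈ T, wT τ * Axiom.vioCount I τ) +
    ∑ α ∈ A, (if Assertion.sat I α then 0 else wA α)

/-! ### Queries -/

inductive Term where
  | var : ℕ → Term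
  | ind : IndName → Term
deriving DecidableEq

inductive QAtom where
  | ca : CName → Term → QAtom
  | ra : RName → Term → Term → QAtom
deriving DecidableEq

/-- A Boolean conjunctive query: a finite set of atoms, all of whose variables are
(implicitly) existentially quantified. -/
abbrev BCQ := Finset QAtom

def Term.eval (I : Interp U) (π : ℕ → U) : Term → U
  | Term.var v => π v
  | Term.ind a => I.indI a

def QAtom.sat (I : Interp U) (π : ℕ → U) : QAtom → Prop
  | QAtom.ca A t => Term.eval I π t ∈ I.cI A
  | QAtom.ra r t t' => (Term.eval I π t, Term.eval I π t') ∈ I.rI r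

/-- Satisfaction of a BCQ in an interpretation. -/
def satQ (I : Interp U) (q : BCQ) : Prop :=
  ∃ π : ℕ → U, (∀ v, π v ∈ I.dom) ∧ ∀ a ∈ q, QAtom.sat I π a

/-- An instance query is a BCQ with a single atom. -/
def IsIQ (q : BCQ) : Prop := ∃ a : QAtom, q = {a}

/-! ### Cost-based semantics -/

/-- `k`-satisfiability: some interpretation has cost at most `k`. -/
def ksat (T : Finset Axiom) (A : Finset Assertion)
    (wT : Axiom → ℕ∞) (wA : Assertion → ℕ∞) (k : ℕ) : Prop :=
  ∃ (U : Type) (I : Interp U), I.Proper ∧ cost T A wT wA I ≤ (k : ℕ∞)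

/-- `K ⊨ₚᵏ q`: some interpretation of cost at most `k` satisfies `q`. -/
def satP (T : Finset Axiom) (A : Finset Assertion)
    (wT : Axiom → ℕ∞) (wA : Assertion → ℕ∞) (k : ℕ) (q : BCQ) : Prop :=
  ∃ (U : Type) (I : Interp U), I.Proper ∧ cost T A wT wA I ≤ (k : ℕ∞) ∧ satQ I q

/-- `K ⊨꜀ᵏ q`: every interpretation of cost at most `k` satisfies `q`. -/
def satC (T : Finset Axiom) (A : Finset Assertion)
    (wT : Axiom → ℕ∞) (wA : Assertion → ℕ∞) (k : ℕ) (q : BCQ) : Prop :=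
  ∀ (U : Type) (I : Interp U), I.Proper → cost T A wT wA I ≤ (k : ℕ∞) → satQ I q

/-- The optimal cost of a weighted knowledge base. -/
noncomputable def optCost (T : Finset Axiom) (A : Finset Assertion)
    (wT : Axiom → ℕ∞) (wA : Assertion → ℕ∞) : ℕ∞ :=
  sInf {c : ℕ∞ | ∃ (U : Type) (I : Interp U), I.Proper ∧ cost T A wT wA I = c}

/-- `K ⊨ₚᵒᵖᵗ q`: some interpretation of optimal cost satisfies `q`. -/
noncomputable def satPopt (T : Finset Axiom) (A : Finset Assertion)
    (wT : Axiom → ℕ∞) (wA : Assertion → ℕ∞) (q : BCQ) : Prop :=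
  ∃ (U : Type) (I : Interp U), I.Proper ∧ cost T A wT wA I = optCost T A wT wA ∧ satQ I q

/-- `K ⊨꜀ᵒᵖᵗ q`: every interpretation of optimal cost satisfies `q`. -/
noncomputable def satCopt (T : Finset Axiom) (A : Finset Assertion)
    (wT : Axiom → ℕ∞) (wA : Assertion → ℕ∞) (q : BCQ) : Prop :=
  ∀ (U : Type) (I : Interp U), I.Proper → cost T A wT wA I = optCost T A wT wA → satQ I q

/-! ### Occurrences of symbols -/

def Role.base : Role → RName
  | Role.name r => r
  | Role.inv r => r

def Concept.cnames : Concept → Finset CName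
  | Concept.atom A => {A}
  | Concept.neg C => C.cnames
  | Concept.conj C D => C.cnames ∪ D.cnames
  | Concept.ex _ C => C.cnames
  | _ => ∅

def Concept.rnames : Concept → Finset RName
  | Concept.neg C => C.rnames
  | Concept.conj C D => C.rnames ∪ D.rnames
  | Concept.ex r C => insert r.base C.rnames
  | _ => ∅

def Concept.indNames : Concept → Finset IndName
  | Concept.nom a => {a}
  | Concept.neg C => C.indNames
  | Concept.conj C D => C.indNames ∪ D.indNames
  | Concept.ex _ C => C.indNames
  | _ => ∅

def Axiom.cnames : Axiom → Finset CName
  | Axiom.ci C D => C.cnames ∪ D.cnames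
  | Axiom.ri _ _ => ∅

def Axiom.rnames : Axiom → Finset RName
  | Axiom.ci C D => C.rnames ∪ D.rnames
  | Axiom.ri r s => {r.base, s.base}

def Axiom.indNames : Axiom → Finset IndName
  | Axiom.ci C D => C.indNames ∪ D.indNames
  | Axiom.ri _ _ => ∅

def Assertion.cnames : Assertion → Finset CName
  | Assertion.ca A _ => {A}
  | Assertion.ra _ _ _ => ∅

def Assertion.rnames : Assertion → Finset RName
  | Assertion.ca _ _ => ∅
  | Assertion.ra r _ _ => {r}

def Assertion.indNames : Assertion → Finset IndName
  | Assertion.ca _ a => {a}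
  | Assertion.ra _ a b => {a, b}

/-- The individual names occurring in an ABox. -/
def aboxInds (A : Finset Assertion) : Finset IndName := A.biUnion Assertion.indNames

/-- The individual names occurring in a KB. -/
def kbInds (T : Finset Axiom) (A : Finset Assertion) : Finset IndName :=
  T.biUnion Axiom.indNames ∪ aboxInds A

def Term.indNames : Term → Finset IndName
  | Term.var _ => ∅
  | Term.ind a => {a}

def QAtom.indNames : QAtom → Finset IndName
  | QAtom.ca _ t => t.indNames
  | QAtom.ra _ t t' => t.indNames ∪ t'.indNames

def QAtom.cnames : QAtom → Finset CName
  | QAtom.ca A _ => {A}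
  | QAtom.ra _ _ _ => ∅

def qInds (q : BCQ) : Finset IndName := q.biUnion QAtom.indNames

def qCnames (q : BCQ) : Finset CName := q.biUnion QAtom.cnames

/-! ### Sizes -/

def Concept.size : Concept → ℕ
  | Concept.top => 1
  | Concept.bot => 1
  | Concept.atom _ => 1
  | Concept.nom _ => 1
  | Concept.neg C => C.size + 1
  | Concept.conj C D => C.size + D.size + 1
  | Concept.ex _ C => C.size + 2

def Axiom.size : Axiom → ℕ
  | Axiom.ci C D => C.size + D.size + 1
  | Axiom.ri _ _ => 3

def Assertion.size : Assertion → ℕ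
  | Assertion.ca _ _ => 2
  | Assertion.ra _ _ _ => 3

def tboxSize (T : Finset Axiom) : ℕ := ∑ τ ∈ T, τ.size

def aboxSize (A : Finset Assertion) : ℕ := ∑ α ∈ A, α.size

/-! ### DL-Lite fragments -/

/-- Basic concepts: concept names and unqualified existential restrictions `∃r` (with a
possibly inverse role `r`), the latter rendered as `∃r.⊤`. -/
inductive IsBasic : Concept → Prop
  | atom (A : CName) : IsBasic (Concept.atom A)
  | ex (r : Role) : IsBasic (Concept.ex r Concept.top)

/-- A `DL-Lite_core` axiom: `B ⊑ C` or `B ⊓ C ⊑ ⊥` with `B, C` basic concepts. -/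
def IsCoreAxiom (τ : Axiom) : Prop :=
  (∃ B C, τ = Axiom.ci B C ∧ IsBasic B ∧ IsBasic C) ∨
  (∃ B C, τ = Axiom.ci (Concept.conj B C) Concept.bot ∧ IsBasic B ∧ IsBasic C)

def IsDLLiteCore (T : Finset Axiom) : Prop := ∀ τ ∈ T, IsCoreAxiom τ

/-- Concepts built from basic concepts using `¬`, `⊓` (and hence also `⊔`). -/
inductive IsBoolConcept : Concept → Prop
  | basic {C} : IsBasic C → IsBoolConcept C
  | neg {C} : IsBoolConcept C → IsBoolConcept (Concept.neg C)
  | conj {C D} : IsBoolConcept C → IsBoolConcept D → IsBoolConcept (Concept.conj C D)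

/-- A `DL-Lite_bool^H` axiom: a concept inclusion between Boolean combinations of basic
concepts, or a role inclusion. -/
def IsBoolHAxiom (τ : Axiom) : Prop :=
  (∃ C D, τ = Axiom.ci C D ∧ IsBoolConcept C ∧ IsBoolConcept D) ∨ (∃ r s, τ = Axiom.ri r s)

def IsDLLiteBoolH (T : Finset Axiom) : Prop := ∀ τ ∈ T, IsBoolHAxiom τ

/-! Encoding of a 3-DNF formula `φ = ⋁_{i<ℓ} ⋀_{j<3} l_{i,j}` over variables
`v_0,…,v_{n-1}`: `φ i j = (p_{i,j}, u_{i,j})` where `p_{i,j} = true` iff `l_{i,j}` is the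
positive literal `u_{i,j}` (and `p_{i,j} = false` iff it is `¬u_{i,j}`).
Triples `s ∈ {0,1}³` are encoded as functions `Fin 3 → Bool`. -/

/-- Numeric encoding of a triple `s ∈ {0,1}³`. -/
def enc3 (s : Fin 3 → Bool) : ℕ :=
  (if s 0 then 1 else 0) + 2 * (if s 1 then 1 else 0) + 4 * (if s 2 then 1 else 0)

/-- concept names -/
def cFalse : CName := 0
def cTrue : CName := 1
def cBool : CName := 2
def cVar : CName := 3

/-- role names: `val`, `clause_s`, `lit_{j,b}` -/
def rVal : RName := 0
def rClause (s : Fin 3 → Bool) : RName := 1 + enc3 s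
def rLit (j : Fin 3) (b : Bool) : RName := 9 + 2 * (j : ℕ) + (if b then 1 else 0)

/-- individual names: `a`, `b`, `d`, `a_s`, `c_i`, `v_k` -/
def aN : IndName := 0
def bN : IndName := 1
def dN : IndName := 2
def aS (s : Fin 3 → Bool) : IndName := 3 + enc3 s
def cN (l : ℕ) (i : Fin l) : IndName := 11 + (i : ℕ)
def vN (l n : ℕ) (k : Fin n) : IndName := 11 + l + (k : ℕ)

/-- The signs of the literals of clause `i`. -/
def sOf (l n : ℕ) (φ : Fin l → Fin 3 → Bool × Fin n) (i : Fin l) : Fin 3 → Bool :=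
  fun j => (φ i j).1

/-- The TBox `T = {Bool ⊑ True, Var ⊑ ∃val, ∃val⁻ ⊑ Bool}`. -/
def dnfCoreTbox : Finset Axiom :=
  {Axiom.ci (Concept.atom cBool) (Concept.atom cTrue),
   Axiom.ci (Concept.atom cVar) (Concept.ex (Role.name rVal) Concept.top),
   Axiom.ci (Concept.ex (Role.inv rVal) Concept.top) (Concept.atom cBool)}

/-- The ABox `A_φ`. -/
def dnfCoreAbox (l n : ℕ) (φ : Fin l → Fin 3 → Bool × Fin n) : Finset Assertion :=
  {Assertion.ca cFalse aN, Assertion.ca cTrue bN, Assertion.ca cBool aN,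
   Assertion.ca cBool bN, Assertion.ra rVal aN aN, Assertion.ra rVal aN bN,
   Assertion.ra rVal dN aN} ∪
  (Finset.univ.image fun k : Fin n => Assertion.ca cVar (vN l n k)) ∪
  (Finset.univ.image fun i : Fin l =>
    Assertion.ra (rClause (sOf l n φ i)) (aS (sOf l n φ i)) (cN l i)) ∪
  (((Finset.univ : Finset ((Fin 3 → Bool) × (Fin 3 → Bool))).filter fun x => x.1 ≠ x.2).image
    fun x => Assertion.ra (rClause x.1) (aS x.2) aN) ∪
  (Finset.univ.image fun s : Fin 3 → Bool => Assertion.ra (rClause s) dN dN) ∪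
  (Finset.univ.image fun p : Fin l × Fin 3 =>
    Assertion.ra (rLit p.2 ((φ p.1 p.2).1)) (cN l p.1) (vN l n ((φ p.1 p.2).2))) ∪
  (Finset.univ.image fun x : Fin 3 × Bool => Assertion.ra (rLit x.1 x.2) aN aN) ∪
  (Finset.univ.image fun x : Fin 3 × Bool => Assertion.ra (rLit x.1 x.2) dN dN)

/-- Query variables: `y`, `y_{s,0..3}` and `y'_{s,1..3}`. -/
def yV : ℕ := 0
def ysV (s : Fin 3 → Bool) (t : Fin 4) : ℕ := 1 + 7 * enc3 s + (t : ℕ)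
def ys'V (s : Fin 3 → Bool) (j : Fin 3) : ℕ := 1 + 7 * enc3 s + 4 + (j : ℕ)

/-- The subquery `q_s(y)` (as a set of atoms, with `y` the shared variable `yV`). -/
def qS (s : Fin 3 → Bool) : Finset QAtom :=
  {QAtom.ra (rClause s) (Term.var yV) (Term.var (ysV s 0))} ∪
  (Finset.univ.biUnion fun j : Fin 3 =>
    {QAtom.ra (rLit j (s j)) (Term.var (ysV s 0)) (Term.var (ysV s j.succ)),
     QAtom.ra rVal (Term.var (ysV s j.succ)) (Term.var (ys'V s j)),
     if s j then QAtom.ca cTrue (Term.var (ys'V s j))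
     else QAtom.ca cFalse (Term.var (ys'V s j))})

/-- The connected acyclic BCQ `q = ∃y ⋀_{s ∈ {0,1}³} q_s(y)`. -/
def dnfCoreQuery : BCQ :=
  (Finset.univ : Finset (Fin 3 → Bool)).biUnion qS

/-! ### Auxiliary lemmas -/

lemma enc3_lt : ∀ s, enc3 s < 8 := by decide

lemma enc3_inj : ∀ s t, enc3 s = enc3 t → s = t := by decide

/-- decoding of `enc3` -/
def dec3 (m : ℕ) : Fin 3 → Bool := fun j => (m / 2 ^ (j : ℕ)) % 2 = 1

lemma dec3_enc3 : ∀ s, dec3 (enc3 s) = s := by decide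

@[simp] lemma rClause_ne_rVal (s) : rClause s ≠ rVal := by
  show ¬((1 + enc3 s : ℕ) = 0); omega
@[simp] lemma rVal_ne_rClause (s) : rVal ≠ rClause s := (rClause_ne_rVal s).symm
@[simp] lemma rLit_ne_rVal (j b) : rLit j b ≠ rVal := by
  show ¬((9 + 2 * (j : ℕ) + (if b then 1 else 0) : ℕ) = 0); cases b <;> simp
@[simp] lemma rVal_ne_rLit (j b) : rVal ≠ rLit j b := (rLit_ne_rVal j b).symm
@[simp] lemma rClause_ne_rLit (s j b) : rClause s ≠ rLit j b := by
  have h8 := enc3_lt s; have hj := j.isLt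
  show ¬((1 + enc3 s : ℕ) = 9 + 2 * (j : ℕ) + (if b then 1 else 0))
  cases b <;> simp <;> omega
@[simp] lemma rLit_ne_rClause (s j b) : rLit j b ≠ rClause s := (rClause_ne_rLit s j b).symm
@[simp] lemma rClause_inj_iff {s t} : rClause s = rClause t ↔ s = t := by
  constructor
  · intro h; exact enc3_inj s t (by simpa [rClause] using h)
  · rintro rfl; rfl
@[simp] lemma rLit_inj_iff {j j' : Fin 3} {b b'} : rLit j b = rLit j' b' ↔ j = j' ∧ b = b' := by
  have hj := j.isLt; have hj' := j'.isLt
  constructor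
  · intro h
    have h' : (9 + 2 * (j : ℕ) + (if b then 1 else 0) : ℕ)
        = 9 + 2 * (j' : ℕ) + (if b' then 1 else 0) := h
    cases b <;> cases b' <;> simp at h' <;>
      first
        | exact ⟨Fin.ext (by omega), rfl⟩
        | exact absurd h' (by omega)
  · rintro ⟨rfl, rfl⟩; rfl

section Names
variable {l n : ℕ}

@[simp] lemma aS_ne_aN (s) : aS s ≠ aN := by show ¬((3 + enc3 s : ℕ) = 0); omega
@[simp] lemma aN_ne_aS (s) : aN ≠ aS s := (aS_ne_aN s).symm
@[simp] lemma aS_ne_bN (s) : aS s ≠ bN := by show ¬((3 + enc3 s : ℕ) = 1); omega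
@[simp] lemma bN_ne_aS (s) : bN ≠ aS s := (aS_ne_bN s).symm
@[simp] lemma aS_ne_dN (s) : aS s ≠ dN := by show ¬((3 + enc3 s : ℕ) = 2); omega
@[simp] lemma dN_ne_aS (s) : dN ≠ aS s := (aS_ne_dN s).symm
@[simp] lemma aS_inj_iff {s t} : aS s = aS t ↔ s = t := by
  constructor
  · intro h; exact enc3_inj s t (by simpa [aS] using h)
  · rintro rfl; rfl
@[simp] lemma cN_ne_aN (i : Fin l) : cN l i ≠ aN := by show ¬((11 + (i:ℕ) : ℕ) = 0); omega
@[simp] lemma aN_ne_cN (i : Fin l) : aN ≠ cN l i := (cN_ne_aN i).symm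
@[simp] lemma cN_ne_bN (i : Fin l) : cN l i ≠ bN := by show ¬((11 + (i:ℕ) : ℕ) = 1); omega
@[simp] lemma bN_ne_cN (i : Fin l) : bN ≠ cN l i := (cN_ne_bN i).symm
@[simp] lemma cN_ne_dN (i : Fin l) : cN l i ≠ dN := by show ¬((11 + (i:ℕ) : ℕ) = 2); omega
@[simp] lemma dN_ne_cN (i : Fin l) : dN ≠ cN l i := (cN_ne_dN i).symm
@[simp] lemma cN_ne_aS (i : Fin l) (s) : cN l i ≠ aS s := by
  have h8 := enc3_lt s
  show ¬((11 + (i:ℕ) : ℕ) = 3 + enc3 s); omega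
@[simp] lemma aS_ne_cN (i : Fin l) (s) : aS s ≠ cN l i := (cN_ne_aS i s).symm
@[simp] lemma cN_inj_iff {i i' : Fin l} : cN l i = cN l i' ↔ i = i' := by
  constructor
  · intro h
    have h' : (11 + (i:ℕ) : ℕ) = 11 + (i':ℕ) := h
    exact Fin.ext (by omega)
  · rintro rfl; rfl
@[simp] lemma vN_ne_aN (k : Fin n) : vN l n k ≠ aN := by
  show ¬((11 + l + (k:ℕ) : ℕ) = 0); omega
@[simp] lemma aN_ne_vN (k : Fin n) : aN ≠ vN l n k := (vN_ne_aN k).symm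
@[simp] lemma vN_ne_bN (k : Fin n) : vN l n k ≠ bN := by
  show ¬((11 + l + (k:ℕ) : ℕ) = 1); omega
@[simp] lemma bN_ne_vN (k : Fin n) : bN ≠ vN l n k := (vN_ne_bN k).symm
@[simp] lemma vN_ne_dN (k : Fin n) : vN l n k ≠ dN := by
  show ¬((11 + l + (k:ℕ) : ℕ) = 2); omega
@[simp] lemma dN_ne_vN (k : Fin n) : dN ≠ vN l n k := (vN_ne_dN k).symm
@[simp] lemma vN_ne_aS (k : Fin n) (s) : vN l n k ≠ aS s := by
  have h8 := enc3_lt s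
  show ¬((11 + l + (k:ℕ) : ℕ) = 3 + enc3 s); omega
@[simp] lemma aS_ne_vN (k : Fin n) (s) : aS s ≠ vN l n k := (vN_ne_aS k s).symm
@[simp] lemma vN_ne_cN (k : Fin n) (i : Fin l) : vN l n k ≠ cN l i := by
  have := i.isLt
  show ¬((11 + l + (k:ℕ) : ℕ) = 11 + (i:ℕ)); omega
@[simp] lemma cN_ne_vN (k : Fin n) (i : Fin l) : cN l i ≠ vN l n k := (vN_ne_cN k i).symm
@[simp] lemma vN_inj_iff {k k' : Fin n} : vN l n k = vN l n k' ↔ k = k' := by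
  constructor
  · intro h
    have h' : (11 + l + (k:ℕ) : ℕ) = 11 + l + (k':ℕ) := h
    exact Fin.ext (by omega)
  · rintro rfl; rfl

@[simp] lemma aN_ne_bN : aN ≠ bN := by show ¬((0:ℕ) = 1); omega
@[simp] lemma bN_ne_aN : bN ≠ aN := aN_ne_bN.symm
@[simp] lemma aN_ne_dN : aN ≠ dN := by show ¬((0:ℕ) = 2); omega
@[simp] lemma dN_ne_aN : dN ≠ aN := aN_ne_dN.symm
@[simp] lemma bN_ne_dN : bN ≠ dN := by show ¬((1:ℕ) = 2); omega
@[simp] lemma dN_ne_bN : dN ≠ bN := bN_ne_dN.symm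

end Names

/-! ### ABox membership -/

variable {l n : ℕ} {φ : Fin l → Fin 3 → Bool × Fin n}

lemma mem_abox {α : Assertion} : α ∈ dnfCoreAbox l n φ ↔
    α = Assertion.ca cFalse aN ∨
    α = Assertion.ca cTrue bN ∨
    α = Assertion.ca cBool aN ∨
    α = Assertion.ca cBool bN ∨
    α = Assertion.ra rVal aN aN ∨
    α = Assertion.ra rVal aN bN ∨
    α = Assertion.ra rVal dN aN ∨
    (∃ k, Assertion.ca cVar (vN l n k) = α) ∨
    (∃ i, Assertion.ra (rClause (sOf l n φ i)) (aS (sOf l n φ i)) (cN l i) = α) ∨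
    (∃ s s', ¬s = s' ∧ Assertion.ra (rClause s) (aS s') aN = α) ∨
    (∃ s, Assertion.ra (rClause s) dN dN = α) ∨
    (∃ i j, Assertion.ra (rLit j (φ i j).1) (cN l i) (vN l n (φ i j).2) = α) ∨
    (∃ j, Assertion.ra (rLit j false) aN aN = α ∨ Assertion.ra (rLit j true) aN aN = α) ∨
    (∃ j, Assertion.ra (rLit j false) dN dN = α ∨ Assertion.ra (rLit j true) dN dN = α) := by
  simp only [dnfCoreAbox, Finset.insert_union, Finset.union_assoc, ne_eq, Finset.mem_insert,
    Finset.mem_union, Finset.mem_singleton, Finset.mem_image, Finset.mem_univ, true_and,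
    Finset.mem_filter, Prod.exists, Bool.exists_bool]

lemma ca_mem_iff {A : CName} {x : IndName} :
    Assertion.ca A x ∈ dnfCoreAbox l n φ ↔
      (A = cFalse ∧ x = aN) ∨ (A = cTrue ∧ x = bN) ∨ (A = cBool ∧ (x = aN ∨ x = bN)) ∨
        (A = cVar ∧ ∃ k, x = vN l n k) := by
  rw [mem_abox]
  constructor
  · rintro (h | h | h | h | h | h | h | ⟨k, h⟩ | ⟨i, h⟩ | ⟨s, s', _, h⟩ | ⟨s, h⟩ |
      ⟨i, j, h⟩ | ⟨j, h | h⟩ | ⟨j, h | h⟩) <;> cases h <;> tauto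
  · rintro (⟨rfl, rfl⟩ | ⟨rfl, rfl⟩ | ⟨rfl, (rfl | rfl)⟩ | ⟨rfl, k, rfl⟩) <;> tauto

lemma ra_val_iff {x y : IndName} :
    Assertion.ra rVal x y ∈ dnfCoreAbox l n φ ↔
      (x = aN ∧ (y = aN ∨ y = bN)) ∨ (x = dN ∧ y = aN) := by
  rw [mem_abox]; simp; tauto

lemma ra_clause_iff {s : Fin 3 → Bool} {x y : IndName} :
    Assertion.ra (rClause s) x y ∈ dnfCoreAbox l n φ ↔
      (∃ i, sOf l n φ i = s ∧ x = aS s ∧ y = cN l i) ∨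
        (∃ s', s ≠ s' ∧ x = aS s' ∧ y = aN) ∨ (x = dN ∧ y = dN) := by
  rw [mem_abox]; simp
  constructor
  · rintro ((⟨i, hi, hx, hy⟩) | (⟨s2, hne, hx, hy⟩) | ⟨hx, hy⟩)
    · exact Or.inl ⟨i, hi, by rw [← hx, hi], hy.symm⟩
    · exact Or.inr (Or.inl ⟨s2, hne, by rw [hx], by rw [hy]⟩)
    · exact Or.inr (Or.inr ⟨hx.symm, hy.symm⟩)
  · rintro ((⟨i, hi, rfl, rfl⟩) | (⟨s', hne, rfl, rfl⟩) | ⟨rfl, rfl⟩)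
    · exact Or.inl ⟨i, hi, by rw [hi], rfl⟩
    · exact Or.inr (Or.inl ⟨s', hne, rfl, rfl⟩)
    · exact Or.inr (Or.inr ⟨rfl, rfl⟩)

lemma ra_lit_iff {j : Fin 3} {b : Bool} {x y : IndName} :
    Assertion.ra (rLit j b) x y ∈ dnfCoreAbox l n φ ↔
      (∃ i, (φ i j).1 = b ∧ x = cN l i ∧ y = vN l n (φ i j).2) ∨
        (x = aN ∧ y = aN) ∨ (x = dN ∧ y = dN) := by
  rw [mem_abox]; simp
  constructor
  · rintro ((⟨i, hb, hx, hy⟩) | (⟨j', h⟩) | ⟨j', h⟩)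
    · exact Or.inl ⟨i, hb, by rw [hx], by rw [hy]⟩
    · rcases h with ⟨⟨rfl, rfl⟩, hx, hy⟩ | ⟨⟨rfl, rfl⟩, hx, hy⟩ <;>
        exact Or.inr (Or.inl ⟨hx.symm, hy.symm⟩)
    · rcases h with ⟨⟨rfl, rfl⟩, hx, hy⟩ | ⟨⟨rfl, rfl⟩, hx, hy⟩ <;>
        exact Or.inr (Or.inr ⟨hx.symm, hy.symm⟩)
  · rintro ((⟨i, hb, rfl, rfl⟩) | ⟨rfl, rfl⟩ | ⟨rfl, rfl⟩)
    · exact Or.inl ⟨i, hb, rfl, rfl⟩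
    · cases b
      · exact Or.inr (Or.inl ⟨j, Or.inl ⟨⟨rfl, rfl⟩, rfl, rfl⟩⟩)
      · exact Or.inr (Or.inl ⟨j, Or.inr ⟨⟨rfl, rfl⟩, rfl, rfl⟩⟩)
    · cases b
      · exact Or.inr (Or.inr ⟨j, Or.inl ⟨⟨rfl, rfl⟩, rfl, rfl⟩⟩)
      · exact Or.inr (Or.inr ⟨j, Or.inr ⟨⟨rfl, rfl⟩, rfl, rfl⟩⟩)

/-! ### Query membership -/

lemma mem_query {a : QAtom} : a ∈ dnfCoreQuery ↔
    ∃ s, a = QAtom.ra (rClause s) (Term.var yV) (Term.var (ysV s 0)) ∨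
      ∃ j : Fin 3,
        a = QAtom.ra (rLit j (s j)) (Term.var (ysV s 0)) (Term.var (ysV s j.succ)) ∨
        a = QAtom.ra rVal (Term.var (ysV s j.succ)) (Term.var (ys'V s j)) ∨
        a = if s j = true then QAtom.ca cTrue (Term.var (ys'V s j))
            else QAtom.ca cFalse (Term.var (ys'V s j)) := by
  simp only [dnfCoreQuery, qS, Finset.mem_biUnion, Finset.mem_univ, true_and,
    Finset.mem_union, Finset.mem_singleton, Finset.mem_insert]

lemma clause_atom_mem (s) :
    QAtom.ra (rClause s) (Term.var yV) (Term.var (ysV s 0)) ∈ dnfCoreQuery :=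
  mem_query.mpr ⟨s, Or.inl rfl⟩

lemma lit_atom_mem (s) (j : Fin 3) :
    QAtom.ra (rLit j (s j)) (Term.var (ysV s 0)) (Term.var (ysV s j.succ)) ∈ dnfCoreQuery :=
  mem_query.mpr ⟨s, Or.inr ⟨j, Or.inl rfl⟩⟩

lemma val_atom_mem (s) (j : Fin 3) :
    QAtom.ra rVal (Term.var (ysV s j.succ)) (Term.var (ys'V s j)) ∈ dnfCoreQuery :=
  mem_query.mpr ⟨s, Or.inr ⟨j, Or.inr (Or.inl rfl)⟩⟩

lemma tv_atom_mem (s) (j : Fin 3) :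
    (if s j = true then QAtom.ca cTrue (Term.var (ys'V s j))
      else QAtom.ca cFalse (Term.var (ys'V s j))) ∈ dnfCoreQuery :=
  mem_query.mpr ⟨s, Or.inr ⟨j, Or.inr (Or.inr rfl)⟩⟩

/-! ### A sufficient condition for satisfying the query -/

lemma satQ_of_witness {U : Type} (I : Interp U) (Y : U) (W : (Fin 3 → Bool) → ℕ → U)
    (hYdom : Y ∈ I.dom) (hWdom : ∀ s t, W s t ∈ I.dom)
    (hclause : ∀ s, (Y, W s 0) ∈ I.rI (rClause s))
    (hlit : ∀ s (j : Fin 3), (W s 0, W s ((j : ℕ) + 1)) ∈ I.rI (rLit j (s j)))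
    (hval : ∀ s (j : Fin 3), (W s ((j : ℕ) + 1), W s (4 + (j : ℕ))) ∈ I.rI rVal)
    (htrue : ∀ s (j : Fin 3), s j = true → W s (4 + (j : ℕ)) ∈ I.cI cTrue)
    (hfalse : ∀ s (j : Fin 3), s j = false → W s (4 + (j : ℕ)) ∈ I.cI cFalse) :
    satQ I dnfCoreQuery := by
  classical
  set π : ℕ → U := fun m => if m = 0 then Y else W (dec3 ((m - 1) / 7)) ((m - 1) % 7)
    with hπdef
  have hπy : π yV = Y := by simp [hπdef, yV]
  have hπs : ∀ s (t : Fin 4), π (ysV s t) = W s (t : ℕ) := by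
    intro s t
    have ht := t.isLt
    have h0 : ¬(ysV s t = 0) := by simp only [ysV]; omega
    have h1 : (ysV s t - 1) / 7 = enc3 s := by simp only [ysV]; omega
    have h2 : (ysV s t - 1) % 7 = (t : ℕ) := by simp only [ysV]; omega
    simp only [hπdef, if_neg h0, h1, h2, dec3_enc3]
  have hπ' : ∀ s (j : Fin 3), π (ys'V s j) = W s (4 + (j : ℕ)) := by
    intro s j
    have hj := j.isLt
    have h0 : ¬(ys'V s j = 0) := by simp only [ys'V]; omega
    have h1 : (ys'V s j - 1) / 7 = enc3 s := by simp only [ys'V]; omega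
    have h2 : (ys'V s j - 1) % 7 = 4 + (j : ℕ) := by simp only [ys'V]; omega
    simp only [hπdef, if_neg h0, h1, h2, dec3_enc3]
  refine ⟨π, ?_, ?_⟩
  · intro v
    simp only [hπdef]
    split
    · exact hYdom
    · exact hWdom _ _
  · intro a ha
    rw [mem_query] at ha
    obtain ⟨s, ha⟩ := ha
    rcases ha with rfl | ⟨j, rfl | rfl | rfl⟩
    · show (π yV, π (ysV s 0)) ∈ I.rI (rClause s)
      rw [hπy, hπs]
      exact hclause s
    · show (π (ysV s 0), π (ysV s j.succ)) ∈ I.rI (rLit j (s j))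
      rw [hπs, hπs, Fin.val_succ]
      exact hlit s j
    · show (π (ysV s j.succ), π (ys'V s j)) ∈ I.rI rVal
      rw [hπs, hπ', Fin.val_succ]
      exact hval s j
    · rcases hsj : s j with _ | _
      · rw [if_neg (by simp)]
        show π (ys'V s j) ∈ I.cI cFalse
        rw [hπ']
        exact hfalse s j hsj
      · rw [if_pos rfl]
        show π (ys'V s j) ∈ I.cI cTrue
        rw [hπ']
        exact htrue s j hsj

/-! ### Extracting facts from a low-cost interpretation -/

def jof (m : ℕ) : Fin 3 := ⟨min m 2, by omega⟩

@[simp] lemma jof_val (j : Fin 3) : jof ((j : ℕ)) = j := by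
  have := j.isLt
  apply Fin.ext
  simp only [jof]
  omega

section Cost

variable {U : Type} {l n : ℕ} {φ : Fin l → Fin 3 → Bool × Fin n} {I : Interp U}

lemma top_not_le_one : ¬((⊤ : ℕ∞) ≤ 1) := by
  intro h
  exact absurd (top_le_iff.mp h) (by simp)

lemma cost_le_facts
    (h : cost dnfCoreTbox (dnfCoreAbox l n φ)
      (fun τ => if τ = Axiom.ci (Concept.atom cBool) (Concept.atom cTrue) then 1 else ⊤)
      (fun _ => ⊤) I ≤ (1 : ℕ∞)) :
    (∀ α ∈ dnfCoreAbox l n φ, Assertion.sat I α) ∧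
      vioCI I (Concept.atom cVar) (Concept.ex (Role.name rVal) Concept.top) = ∅ ∧
      vioCI I (Concept.ex (Role.inv rVal) Concept.top) (Concept.atom cBool) = ∅ ∧
      (vioCI I (Concept.atom cBool) (Concept.atom cTrue)).encard ≤ 1 := by
  classical
  set wT : Axiom → ℕ∞ :=
    fun τ => if τ = Axiom.ci (Concept.atom cBool) (Concept.atom cTrue) then 1 else ⊤ with hwT
  rw [cost] at h
  have hT : (∑ τ ∈ dnfCoreTbox, wT τ * Axiom.vioCount I τ) ≤ 1 := le_trans le_self_add h
  have hA : (∑ α ∈ dnfCoreAbox l n φ,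
      (if Assertion.sat I α then (0 : ℕ∞) else ⊤)) ≤ 1 := le_trans le_add_self h
  have key : ∀ τ ∈ dnfCoreTbox, wT τ * Axiom.vioCount I τ ≤ 1 := by
    intro τ hτ
    exact le_trans (Finset.single_le_sum (f := fun τ => wT τ * Axiom.vioCount I τ)
      (fun i _ => zero_le) hτ) hT
  refine ⟨?_, ?_, ?_, ?_⟩
  · intro α hα
    by_contra hns
    have h1 : (if Assertion.sat I α then (0 : ℕ∞) else ⊤) ≤ 1 :=
      le_trans (Finset.single_le_sum (f := fun α => if Assertion.sat I α then (0 : ℕ∞) else ⊤)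
        (fun i _ => zero_le) hα) hA
    rw [if_neg hns] at h1
    exact top_not_le_one h1
  · have hmem : Axiom.ci (Concept.atom cVar) (Concept.ex (Role.name rVal) Concept.top)
        ∈ dnfCoreTbox := by simp [dnfCoreTbox]
    have h1 := key _ hmem
    have h2 : wT (Axiom.ci (Concept.atom cVar) (Concept.ex (Role.name rVal) Concept.top))
        = ⊤ := if_neg (by decide)
    rw [h2] at h1
    by_contra hne
    rw [show Axiom.vioCount I (Axiom.ci (Concept.atom cVar)
        (Concept.ex (Role.name rVal) Concept.top)) =
        (vioCI I (Concept.atom cVar) (Concept.ex (Role.name rVal) Concept.top)).encard from rfl,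
      ENat.top_mul (by simpa using hne)] at h1
    exact top_not_le_one h1
  · have hmem : Axiom.ci (Concept.ex (Role.inv rVal) Concept.top) (Concept.atom cBool)
        ∈ dnfCoreTbox := by simp [dnfCoreTbox]
    have h1 := key _ hmem
    have h2 : wT (Axiom.ci (Concept.ex (Role.inv rVal) Concept.top) (Concept.atom cBool))
        = ⊤ := if_neg (by decide)
    rw [h2] at h1
    by_contra hne
    rw [show Axiom.vioCount I (Axiom.ci (Concept.ex (Role.inv rVal) Concept.top)
        (Concept.atom cBool)) =
        (vioCI I (Concept.ex (Role.inv rVal) Concept.top) (Concept.atom cBool)).encard from rfl,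
      ENat.top_mul (by simpa using hne)] at h1
    exact top_not_le_one h1
  · have hmem : Axiom.ci (Concept.atom cBool) (Concept.atom cTrue) ∈ dnfCoreTbox := by
      simp [dnfCoreTbox]
    have h1 := key _ hmem
    have h2 : wT (Axiom.ci (Concept.atom cBool) (Concept.atom cTrue)) = 1 := if_pos rfl
    rw [h2, one_mul] at h1
    exact h1

lemma forward
    (taut : ∀ ν : Fin n → Bool, ∃ i : Fin l, ∀ j : Fin 3, ν (φ i j).2 = (φ i j).1)
    (hP : I.Proper)
    (hcost : cost dnfCoreTbox (dnfCoreAbox l n φ)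
      (fun τ => if τ = Axiom.ci (Concept.atom cBool) (Concept.atom cTrue) then 1 else ⊤)
      (fun _ => ⊤) I ≤ (1 : ℕ∞)) :
    satQ I dnfCoreQuery := by
  classical
  obtain ⟨hA, hv2, hv3, hBT⟩ := cost_le_facts hcost
  -- basic assertion facts
  have hFalseA : I.indI aN ∈ I.cI cFalse := hA _ (ca_mem_iff.mpr (Or.inl ⟨rfl, rfl⟩))
  have hTrueB : I.indI bN ∈ I.cI cTrue := hA _ (ca_mem_iff.mpr (Or.inr (Or.inl ⟨rfl, rfl⟩)))
  have hBoolA : I.indI aN ∈ I.cI cBool :=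
    hA _ (ca_mem_iff.mpr (Or.inr (Or.inr (Or.inl ⟨rfl, Or.inl rfl⟩))))
  have hVark : ∀ k : Fin n, I.indI (vN l n k) ∈ I.cI cVar := fun k =>
    hA _ (ca_mem_iff.mpr (Or.inr (Or.inr (Or.inr ⟨rfl, k, rfl⟩))))
  have hvalAA : (I.indI aN, I.indI aN) ∈ I.rI rVal :=
    hA _ (ra_val_iff.mpr (Or.inl ⟨rfl, Or.inl rfl⟩))
  have hvalAB : (I.indI aN, I.indI bN) ∈ I.rI rVal :=
    hA _ (ra_val_iff.mpr (Or.inl ⟨rfl, Or.inr rfl⟩))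
  have hvalDA : (I.indI dN, I.indI aN) ∈ I.rI rVal :=
    hA _ (ra_val_iff.mpr (Or.inr ⟨rfl, rfl⟩))
  have hclDD : ∀ s, (I.indI dN, I.indI dN) ∈ I.rI (rClause s) := fun s =>
    hA _ (ra_clause_iff.mpr (Or.inr (Or.inr ⟨rfl, rfl⟩)))
  have hclS : ∀ i : Fin l,
      (I.indI (aS (sOf l n φ i)), I.indI (cN l i)) ∈ I.rI (rClause (sOf l n φ i)) := fun i =>
    hA _ (ra_clause_iff.mpr (Or.inl ⟨i, rfl, rfl, rfl⟩))
  have hclNe : ∀ s s', s ≠ s' → (I.indI (aS s'), I.indI aN) ∈ I.rI (rClause s) :=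
    fun s s' hne => hA _ (ra_clause_iff.mpr (Or.inr (Or.inl ⟨s', hne, rfl, rfl⟩)))
  have hlitC : ∀ (i : Fin l) (j : Fin 3),
      (I.indI (cN l i), I.indI (vN l n ((φ i j).2))) ∈ I.rI (rLit j ((φ i j).1)) :=
    fun i j => hA _ (ra_lit_iff.mpr (Or.inl ⟨i, rfl, rfl, rfl⟩))
  have hlitAA : ∀ (j : Fin 3) (b : Bool), (I.indI aN, I.indI aN) ∈ I.rI (rLit j b) :=
    fun j b => hA _ (ra_lit_iff.mpr (Or.inr (Or.inl ⟨rfl, rfl⟩)))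
  have hlitDD : ∀ (j : Fin 3) (b : Bool), (I.indI dN, I.indI dN) ∈ I.rI (rLit j b) :=
    fun j b => hA _ (ra_lit_iff.mpr (Or.inr (Or.inr ⟨rfl, rfl⟩)))
  -- TBox facts
  have hvar : ∀ x ∈ I.cI cVar, ∃ e, (x, e) ∈ I.rI rVal := by
    intro x hx
    have h1 := Set.eq_empty_iff_forall_notMem.mp hv2 x
    rw [vioCI, Set.mem_diff] at h1
    push_neg at h1
    obtain ⟨e, he, -⟩ := h1 hx
    exact ⟨e, he⟩
  have hbool : ∀ x y, (x, y) ∈ I.rI rVal → y ∈ I.cI cBool := by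
    intro x y hxy
    have h1 := Set.eq_empty_iff_forall_notMem.mp hv3 y
    rw [vioCI, Set.mem_diff] at h1
    push_neg at h1
    exact h1 ⟨x, hxy, (I.rI_sub rVal _ hxy).1⟩
  have hsing : ∀ x y, x ∈ I.cI cBool → x ∉ I.cI cTrue →
      y ∈ I.cI cBool → y ∉ I.cI cTrue → x = y := by
    intro x y hx hx' hy hy'
    exact Set.encard_le_one_iff.mp hBT x y ⟨hx, hx'⟩ ⟨hy, hy'⟩
  by_cases hat : I.indI aN ∈ I.cI cTrue
  · -- the element `d` works everywhere
    set W : (Fin 3 → Bool) → ℕ → U := fun _ t => if t ≤ 3 then I.indI dN else I.indI aN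
      with hWdef
    have hWle : ∀ s t, t ≤ 3 → W s t = I.indI dN := fun s t ht => by simp [hWdef, ht]
    have hWgt : ∀ s t, ¬(t ≤ 3) → W s t = I.indI aN := fun s t ht => by simp [hWdef, ht]
    refine satQ_of_witness I (I.indI dN) W (hP dN) ?_ ?_ ?_ ?_ ?_ ?_
    · intro s t
      by_cases ht : t ≤ 3
      · rw [hWle s t ht]; exact hP dN
      · rw [hWgt s t ht]; exact hP aN
    · intro s; rw [hWle s 0 (by omega)]; exact hclDD s
    · intro s j
      rw [hWle s 0 (by omega), hWle s _ (by have := j.isLt; omega)]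
      exact hlitDD j (s j)
    · intro s j
      rw [hWle s _ (by have := j.isLt; omega), hWgt s _ (by omega)]
      exact hvalDA
    · intro s j _; rw [hWgt s _ (by omega)]; exact hat
    · intro s j _; rw [hWgt s _ (by omega)]; exact hFalseA
  · -- `a` is the unique Bool-not-True element
    choose e he using fun k : Fin n => hvar _ (hVark k)
    set ν : Fin n → Bool := fun k => if e k ∈ I.cI cTrue then true else false with hν
    have hνt : ∀ k, ν k = true → e k ∈ I.cI cTrue := by
      intro k hk
      by_cases hc : e k ∈ I.cI cTrue
      · exact hc
      · rw [hν] at hk; simp [hc] at hk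
    have hνf : ∀ k, ν k = false → e k ∈ I.cI cFalse := by
      intro k hk
      have hc : e k ∉ I.cI cTrue := by
        intro hc; rw [hν] at hk; simp [hc] at hk
      have heq : e k = I.indI aN := hsing _ _ (hbool _ _ (he k)) hc hBoolA hat
      rw [heq]; exact hFalseA
    obtain ⟨i, hi⟩ := taut ν
    set s₀ : Fin 3 → Bool := sOf l n φ i with hs₀
    set W : (Fin 3 → Bool) → ℕ → U := fun s t =>
      if s = s₀ then
        (if t = 0 then I.indI (cN l i)
         else if t ≤ 3 then I.indI (vN l n ((φ i (jof (t - 1))).2))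
         else e ((φ i (jof (t - 4))).2))
      else
        (if t ≤ 3 then I.indI aN
         else if s (jof (t - 4)) then I.indI bN else I.indI aN) with hWdef
    have hW0p : W s₀ 0 = I.indI (cN l i) := by simp [hWdef]
    have hW0n : ∀ s, s ≠ s₀ → W s 0 = I.indI aN := by
      intro s hss; simp [hWdef, hss]
    have hWjp : ∀ j : Fin 3, W s₀ ((j : ℕ) + 1) = I.indI (vN l n ((φ i j).2)) := by
      intro j
      have h1 : (j : ℕ) + 1 ≤ 3 := by have := j.isLt; omega
      simp [hWdef, h1]
    have hWjn : ∀ s (j : Fin 3), s ≠ s₀ → W s ((j : ℕ) + 1) = I.indI aN := by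
      intro s j hss
      have h1 : (j : ℕ) + 1 ≤ 3 := by have := j.isLt; omega
      simp [hWdef, hss, h1]
    have hW4p : ∀ j : Fin 3, W s₀ (4 + (j : ℕ)) = e ((φ i j).2) := by
      intro j
      have h0 : ¬(4 + (j : ℕ) = 0) := by omega
      have h1 : ¬(4 + (j : ℕ) ≤ 3) := by omega
      have h2 : 4 + (j : ℕ) - 4 = (j : ℕ) := by omega
      simp [hWdef, h0, h1, h2]
    have hW4n : ∀ s (j : Fin 3), s ≠ s₀ →
        W s (4 + (j : ℕ)) = if s j then I.indI bN else I.indI aN := by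
      intro s j hss
      have h1 : ¬(4 + (j : ℕ) ≤ 3) := by omega
      have h2 : 4 + (j : ℕ) - 4 = (j : ℕ) := by omega
      simp [hWdef, hss, h1, h2]
    refine satQ_of_witness I (I.indI (aS s₀)) W (hP _) ?_ ?_ ?_ ?_ ?_ ?_
    · intro s t
      rw [hWdef]
      dsimp only
      split_ifs <;> first | apply hP | exact (I.rI_sub rVal _ (he _)).2
    · intro s
      by_cases hss : s = s₀
      · subst hss; rw [hW0p]; exact hclS i
      · rw [hW0n s hss]
        exact hclNe s s₀ hss
    · intro s j
      by_cases hss : s = s₀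
      · subst hss; rw [hW0p, hWjp]
        exact hlitC i j
      · rw [hW0n s hss, hWjn s j hss]
        exact hlitAA j (s j)
    · intro s j
      by_cases hss : s = s₀
      · subst hss; rw [hWjp, hW4p]
        exact he _
      · rw [hWjn s j hss, hW4n s j hss]
        rcases hsj : s j with _ | _
        · rw [if_neg (by simp)]; exact hvalAA
        · rw [if_pos rfl]; exact hvalAB
    · intro s j hsj
      by_cases hss : s = s₀
      · subst hss; rw [hW4p]
        apply hνt
        rw [hi j]
        exact hsj
      · rw [hW4n s j hss, if_pos hsj]
        exact hTrueB
    · intro s j hsj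
      by_cases hss : s = s₀
      · subst hss; rw [hW4p]
        apply hνf
        rw [hi j]
        exact hsj
      · rw [hW4n s j hss, if_neg (by simp [hsj])]
        exact hFalseA

end Cost

/-! ### Concept-name disequalities -/

@[simp] lemma cFalse_ne_cTrue : cFalse ≠ cTrue := by decide
@[simp] lemma cTrue_ne_cFalse : cTrue ≠ cFalse := by decide
@[simp] lemma cFalse_ne_cBool : cFalse ≠ cBool := by decide
@[simp] lemma cBool_ne_cFalse : cBool ≠ cFalse := by decide
@[simp] lemma cFalse_ne_cVar : cFalse ≠ cVar := by decide
@[simp] lemma cVar_ne_cFalse : cVar ≠ cFalse := by decide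
@[simp] lemma cTrue_ne_cBool : cTrue ≠ cBool := by decide
@[simp] lemma cBool_ne_cTrue : cBool ≠ cTrue := by decide
@[simp] lemma cTrue_ne_cVar : cTrue ≠ cVar := by decide
@[simp] lemma cVar_ne_cTrue : cVar ≠ cTrue := by decide
@[simp] lemma cBool_ne_cVar : cBool ≠ cVar := by decide
@[simp] lemma cVar_ne_cBool : cVar ≠ cBool := by decide

/-! ### The counter-model -/

section Backward

variable {l n : ℕ} {φ : Fin l → Fin 3 → Bool × Fin n} {ν : Fin n → Bool}

/-- The counter-model determined by an assignment `ν` falsifying all clauses. -/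
def cModel (l n : ℕ) (φ : Fin l → Fin 3 → Bool × Fin n) (ν : Fin n → Bool) :
    Interp IndName where
  dom := Set.univ
  indI := id
  cI A := {x | Assertion.ca A x ∈ dnfCoreAbox l n φ}
  rI r := {p | Assertion.ra r p.1 p.2 ∈ dnfCoreAbox l n φ} ∪
    {p | r = rVal ∧ ∃ k : Fin n, p.1 = vN l n k ∧ p.2 = (if ν k then bN else aN)}
  cI_sub := fun _ => Set.subset_univ _
  rI_sub := fun _ _ _ => ⟨trivial, trivial⟩

lemma cModel_proper : (cModel l n φ ν).Proper := fun _ => trivial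

lemma cModel_mem_cI {A x} :
    x ∈ (cModel l n φ ν).cI A ↔ Assertion.ca A x ∈ dnfCoreAbox l n φ := Iff.rfl

lemma cModel_mem_rI {r x y} :
    (x, y) ∈ (cModel l n φ ν).rI r ↔
      (Assertion.ra r x y ∈ dnfCoreAbox l n φ ∨
        (r = rVal ∧ ∃ k, x = vN l n k ∧ y = (if ν k then bN else aN))) := Iff.rfl

lemma cModel_sat : ∀ α ∈ dnfCoreAbox l n φ, Assertion.sat (cModel l n φ ν) α := by
  intro α hα
  cases α with
  | ca A x => exact hα
  | ra r x y => exact Or.inl hα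

lemma cModel_vio_BT :
    vioCI (cModel l n φ ν) (Concept.atom cBool) (Concept.atom cTrue) = {aN} := by
  ext x
  rw [vioCI, Set.mem_diff, Set.mem_singleton_iff,
    show Concept.interp (cModel l n φ ν) (Concept.atom cBool) = (cModel l n φ ν).cI cBool
      from rfl,
    show Concept.interp (cModel l n φ ν) (Concept.atom cTrue) = (cModel l n φ ν).cI cTrue
      from rfl, cModel_mem_cI, cModel_mem_cI, ca_mem_iff, ca_mem_iff]
  simp only [cBool_ne_cFalse, cBool_ne_cTrue, cBool_ne_cVar, cTrue_ne_cFalse,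
    cTrue_ne_cBool, cTrue_ne_cVar, false_and, false_or, or_false, true_and, eq_self_iff_true]
  constructor
  · rintro ⟨rfl | rfl, h2⟩
    · rfl
    · exact absurd rfl h2
  · rintro rfl
    exact ⟨Or.inl rfl, fun h => aN_ne_bN h⟩

lemma cModel_vio_Var :
    vioCI (cModel l n φ ν) (Concept.atom cVar)
      (Concept.ex (Role.name rVal) Concept.top) = ∅ := by
  rw [vioCI, Set.diff_eq_empty]
  intro x hx
  rw [show Concept.interp (cModel l n φ ν) (Concept.atom cVar) = (cModel l n φ ν).cI cVar
      from rfl, cModel_mem_cI, ca_mem_iff] at hx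
  simp only [cVar_ne_cFalse, cVar_ne_cTrue, cVar_ne_cBool, false_and, false_or, true_and] at hx
  obtain ⟨k, rfl⟩ := hx
  exact ⟨if ν k then bN else aN, Or.inr ⟨rfl, k, rfl, rfl⟩, trivial⟩

lemma cModel_vio_Inv :
    vioCI (cModel l n φ ν) (Concept.ex (Role.inv rVal) Concept.top)
      (Concept.atom cBool) = ∅ := by
  rw [vioCI, Set.diff_eq_empty]
  rintro y ⟨x, hx, -⟩
  have hx' : (x, y) ∈ (cModel l n φ ν).rI rVal := hx
  rw [cModel_mem_rI] at hx'
  rw [show Concept.interp (cModel l n φ ν) (Concept.atom cBool) = (cModel l n φ ν).cI cBool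
      from rfl, cModel_mem_cI, ca_mem_iff]
  rcases hx' with h | ⟨-, k, -, hk⟩
  · rw [ra_val_iff] at h
    rcases h with ⟨-, rfl | rfl⟩ | ⟨-, rfl⟩
    · exact Or.inr (Or.inr (Or.inl ⟨rfl, Or.inl rfl⟩))
    · exact Or.inr (Or.inr (Or.inl ⟨rfl, Or.inr rfl⟩))
    · exact Or.inr (Or.inr (Or.inl ⟨rfl, Or.inl rfl⟩))
  · by_cases hk' : ν k = true
    · rw [if_pos hk'] at hk
      exact Or.inr (Or.inr (Or.inl ⟨rfl, Or.inr hk⟩))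
    · rw [if_neg hk'] at hk
      exact Or.inr (Or.inr (Or.inl ⟨rfl, Or.inl hk⟩))

lemma cModel_cost :
    cost dnfCoreTbox (dnfCoreAbox l n φ)
      (fun τ => if τ = Axiom.ci (Concept.atom cBool) (Concept.atom cTrue) then 1 else ⊤)
      (fun _ => ⊤) (cModel l n φ ν) = 1 := by
  classical
  rw [cost]
  have hA0 : (∑ α ∈ dnfCoreAbox l n φ,
      if Assertion.sat (cModel l n φ ν) α then (0 : ℕ∞) else ⊤) = 0 :=
    Finset.sum_eq_zero fun α hα => if_pos (cModel_sat α hα)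
  rw [hA0, add_zero]
  simp only [dnfCoreTbox]
  rw [Finset.sum_insert (by decide), Finset.sum_insert (by decide), Finset.sum_singleton]
  have h1 : Axiom.vioCount (cModel l n φ ν)
      (Axiom.ci (Concept.atom cBool) (Concept.atom cTrue)) = 1 := by
    rw [show Axiom.vioCount (cModel l n φ ν)
        (Axiom.ci (Concept.atom cBool) (Concept.atom cTrue)) =
        (vioCI (cModel l n φ ν) (Concept.atom cBool) (Concept.atom cTrue)).encard from rfl,
      cModel_vio_BT]
    exact Set.encard_singleton _
  have h2 : Axiom.vioCount (cModel l n φ ν)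
      (Axiom.ci (Concept.atom cVar) (Concept.ex (Role.name rVal) Concept.top)) = 0 := by
    rw [show Axiom.vioCount (cModel l n φ ν)
        (Axiom.ci (Concept.atom cVar) (Concept.ex (Role.name rVal) Concept.top)) =
        (vioCI (cModel l n φ ν) (Concept.atom cVar)
          (Concept.ex (Role.name rVal) Concept.top)).encard from rfl, cModel_vio_Var]
    exact Set.encard_empty
  have h3 : Axiom.vioCount (cModel l n φ ν)
      (Axiom.ci (Concept.ex (Role.inv rVal) Concept.top) (Concept.atom cBool)) = 0 := by
    rw [show Axiom.vioCount (cModel l n φ ν)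
        (Axiom.ci (Concept.ex (Role.inv rVal) Concept.top) (Concept.atom cBool)) =
        (vioCI (cModel l n φ ν) (Concept.ex (Role.inv rVal) Concept.top)
          (Concept.atom cBool)).encard from rfl, cModel_vio_Inv]
    exact Set.encard_empty
  rw [h1, h2, h3, if_pos rfl, if_neg (by decide), if_neg (by decide)]
  simp

lemma cModel_not_satQ (hν : ∀ i : Fin l, ∃ j : Fin 3, ν (φ i j).2 ≠ (φ i j).1) :
    ¬ satQ (cModel l n φ ν) dnfCoreQuery := by
  rintro ⟨π, -, hsat⟩
  -- edge extraction helpers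
  have hcl : ∀ s x y, (x, y) ∈ (cModel l n φ ν).rI (rClause s) →
      Assertion.ra (rClause s) x y ∈ dnfCoreAbox l n φ := by
    intro s x y h
    rcases cModel_mem_rI.mp h with h | ⟨hr, -⟩
    · exact h
    · exact absurd hr (rClause_ne_rVal s)
  have hli : ∀ (j : Fin 3) (b : Bool) x y, (x, y) ∈ (cModel l n φ ν).rI (rLit j b) →
      Assertion.ra (rLit j b) x y ∈ dnfCoreAbox l n φ := by
    intro j b x y h
    rcases cModel_mem_rI.mp h with h | ⟨hr, -⟩
    · exact h
    · exact absurd hr (rLit_ne_rVal j b)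
  have hva : ∀ x y, (x, y) ∈ (cModel l n φ ν).rI rVal →
      Assertion.ra rVal x y ∈ dnfCoreAbox l n φ ∨
        ∃ k, x = vN l n k ∧ y = (if ν k then bN else aN) := by
    intro x y h
    rcases cModel_mem_rI.mp h with h | ⟨-, hk⟩
    · exact Or.inl h
    · exact Or.inr hk
  -- clause edges out of π yV
  have hstep : ∀ s, Assertion.ra (rClause s) (π yV) (π (ysV s 0)) ∈ dnfCoreAbox l n φ := by
    intro s
    exact hcl s _ _ (hsat _ (clause_atom_mem s))
  -- π yV is either dN or some aS s₁
  have hy0 := hstep (fun _ => true)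
  rw [ra_clause_iff] at hy0
  have hycases : π yV = dN ∨ ∃ s₁, π yV = aS s₁ := by
    rcases hy0 with ⟨i, -, hx, -⟩ | ⟨s', -, hx, -⟩ | ⟨hx, -⟩
    · exact Or.inr ⟨_, hx⟩
    · exact Or.inr ⟨_, hx⟩
    · exact Or.inl hx
  rcases hycases with hyD | ⟨s₁, hyA⟩
  · -- case π yV = dN : fails on the all-true subquery at j = 0
    set sT : Fin 3 → Bool := fun _ => true with hsT
    have h1 := hstep sT
    rw [ra_clause_iff, hyD] at h1
    have hz : π (ysV sT 0) = dN := by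
      rcases h1 with ⟨i, -, hx, -⟩ | ⟨s', -, hx, -⟩ | ⟨-, hz⟩
      · exact absurd hx.symm (aS_ne_dN _)
      · exact absurd hx.symm (aS_ne_dN _)
      · exact hz
    have h2 : (π (ysV sT 0), π (ysV sT (0 : Fin 3).succ)) ∈
        (cModel l n φ ν).rI (rLit 0 (sT 0)) := hsat _ (lit_atom_mem sT 0)
    have h2' := hli _ _ _ _ h2
    rw [ra_lit_iff, hz] at h2'
    have hz2 : π (ysV sT (0 : Fin 3).succ) = dN := by
      rcases h2' with ⟨i, -, hx, -⟩ | ⟨hx, -⟩ | ⟨-, hz2⟩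
      · exact absurd hx.symm (cN_ne_dN _)
      · exact absurd hx.symm aN_ne_dN
      · exact hz2
    have h3 : (π (ysV sT (0 : Fin 3).succ), π (ys'V sT 0)) ∈
        (cModel l n φ ν).rI rVal := hsat _ (val_atom_mem sT 0)
    have hw : π (ys'V sT 0) = aN := by
      rcases hva _ _ h3 with h | ⟨k, hk1, -⟩
      · rw [ra_val_iff, hz2] at h
        rcases h with ⟨hx, -⟩ | ⟨-, hw⟩
        · exact absurd hx dN_ne_aN
        · exact hw
      · rw [hz2] at hk1
        exact absurd hk1 (dN_ne_vN k)
    have h4 := hsat _ (tv_atom_mem sT 0)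
    rw [if_pos (show sT 0 = true from rfl)] at h4
    have h4' : Assertion.ca cTrue (π (ys'V sT 0)) ∈ dnfCoreAbox l n φ := h4
    rw [hw, ca_mem_iff] at h4'
    rcases h4' with ⟨h, -⟩ | ⟨-, h⟩ | ⟨h, -⟩ | ⟨h, -⟩
    · exact cTrue_ne_cFalse h
    · exact aN_ne_bN h
    · exact cTrue_ne_cBool h
    · exact cTrue_ne_cVar h
  · -- case π yV = aS s₁ : the subquery q_{s₁} forces a clause of φ to be true under ν
    have h1 := hstep s₁
    rw [ra_clause_iff, hyA] at h1
    obtain ⟨i, hsOf, hz⟩ : ∃ i, sOf l n φ i = s₁ ∧ π (ysV s₁ 0) = cN l i := by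
      rcases h1 with ⟨i, hi, -, hz⟩ | ⟨s', hne, hx, -⟩ | ⟨hx, -⟩
      · exact ⟨i, hi, hz⟩
      · exact absurd (aS_inj_iff.mp hx) hne
      · exact absurd hx (aS_ne_dN s₁)
    obtain ⟨j, hj⟩ := hν i
    -- the literal edge
    have h2 : (π (ysV s₁ 0), π (ysV s₁ j.succ)) ∈
        (cModel l n φ ν).rI (rLit j (s₁ j)) := hsat _ (lit_atom_mem s₁ j)
    have h2' := hli _ _ _ _ h2
    rw [ra_lit_iff, hz] at h2'
    obtain ⟨hb, hyy⟩ : (φ i j).1 = s₁ j ∧ π (ysV s₁ j.succ) = vN l n ((φ i j).2) := by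
      rcases h2' with ⟨i', hb, hx, hyy⟩ | ⟨hx, -⟩ | ⟨hx, -⟩
      · obtain rfl : i' = i := (cN_inj_iff.mp hx).symm
        exact ⟨hb, hyy⟩
      · exact absurd hx (cN_ne_aN i)
      · exact absurd hx (cN_ne_dN i)
    -- the val edge
    have h3 : (π (ysV s₁ j.succ), π (ys'V s₁ j)) ∈
        (cModel l n φ ν).rI rVal := hsat _ (val_atom_mem s₁ j)
    have hk2 : π (ys'V s₁ j) = (if ν ((φ i j).2) then bN else aN) := by
      rcases hva _ _ h3 with h | ⟨k, hk1, hk2⟩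
      · rw [ra_val_iff, hyy] at h
        rcases h with ⟨hx, -⟩ | ⟨hx, -⟩
        · exact absurd hx (vN_ne_aN _)
        · exact absurd hx (vN_ne_dN _)
      · rw [hyy] at hk1
        obtain rfl : k = (φ i j).2 := (vN_inj_iff.mp hk1).symm
        exact hk2
    -- the truth-value atom
    have h4 := hsat _ (tv_atom_mem s₁ j)
    apply hj
    rcases hbj : s₁ j with _ | _
    · -- s₁ j = false : π (ys'V s₁ j) ∈ False, hence = aN, hence ν ((φ i j).2) = false
      rw [if_neg (by rw [hbj]; simp)] at h4
      have h4' : Assertion.ca cFalse (π (ys'V s₁ j)) ∈ dnfCoreAbox l n φ := h4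
      rw [hk2, ca_mem_iff] at h4'
      have hite : (if ν ((φ i j).2) then bN else aN) = aN := by
        rcases h4' with ⟨-, h⟩ | ⟨h, -⟩ | ⟨h, -⟩ | ⟨h, -⟩
        · exact h
        · exact absurd h cFalse_ne_cTrue
        · exact absurd h cFalse_ne_cBool
        · exact absurd h cFalse_ne_cVar
      have hνk : ν ((φ i j).2) = false := by
        by_cases hc : ν ((φ i j).2) = true
        · rw [if_pos hc] at hite
          exact absurd hite bN_ne_aN
        · simpa using hc
      rw [hνk, hb, hbj]
    · -- s₁ j = true : π (ys'V s₁ j) ∈ True, hence = bN, hence ν ((φ i j).2) = true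
      rw [if_pos hbj] at h4
      have h4' : Assertion.ca cTrue (π (ys'V s₁ j)) ∈ dnfCoreAbox l n φ := h4
      rw [hk2, ca_mem_iff] at h4'
      have hite : (if ν ((φ i j).2) then bN else aN) = bN := by
        rcases h4' with ⟨h, -⟩ | ⟨-, h⟩ | ⟨h, -⟩ | ⟨h, -⟩
        · exact absurd h cTrue_ne_cFalse
        · exact h
        · exact absurd h cTrue_ne_cBool
        · exact absurd h cTrue_ne_cVar
      have hνk : ν ((φ i j).2) = true := by
        by_cases hc : ν ((φ i j).2) = true
        · exact hc
        · rw [if_neg hc] at hite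
          exact absurd hite aN_ne_bN
      rw [hνk, hb, hbj]

end Backward

/-- A 3-DNF formula `φ` is a tautology iff
`(T, A_φ)_ω ⊨꜀¹ q`, where `ω` assigns weight `1` to `Bool ⊑ True` and `∞` to all other
axioms and to all assertions. -/
theorem statement15 (l n : ℕ) (φ : Fin l → Fin 3 → Bool × Fin n) :
    (∀ ν : Fin n → Bool, ∃ i : Fin l, ∀ j : Fin 3, ν (φ i j).2 = (φ i j).1) ↔
      satC dnfCoreTbox (dnfCoreAbox l n φ)
        (fun τ => if τ = Axiom.ci (Concept.atom cBool) (Concept.atom cTrue) then 1 else ⊤)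
        (fun _ => ⊤) 1 dnfCoreQuery := by
  constructor
  · intro taut U I hP hc
    exact forward taut hP hc
  · intro hs
    by_contra hnt
    push_neg at hnt
    obtain ⟨ν, hν⟩ := hnt
    exact cModel_not_satQ hν
      (hs IndName (cModel l n φ ν) cModel_proper (le_of_eq cModel_cost))

end DL
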